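/- Let μ be an unconditional log-concave measure on R^n, K a symmetric convex body, and u a standard basis vector. Then μ(K)·μ(K^o) ≤ μ(S_u K)·μ((S_u K)^o). -/

import Mathlib

/-!
Both factors increase separately; write `F = ofReal ∘ f` and integrate fibrewise. Over a point `w`
of `u^⊥` the fibre of `S_u K` contains `(A - A) / 2`, where `A` is the fibre of `K`. At a fixed
height `ζ` along `u`, the slice of `(S_u K)°` contains `(B - B) / 2`, where `B` is the slice of
`K°`: this is where `K = -K` enters. On each fibre `F` is even (unconditionality) and midpoint
log-concave, so the Prékopa–Leindler inequality with weight `1/2`, applied to `1_A F`,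
`1_A F (-·)` and `1_{(A - A)/2} F`, gives `(∫_A F)² ≤ (∫_{(A - A)/2} F)²`.

Prékopa–Leindler on `ℝ` follows from the one-dimensional Brunn–Minkowski inequality applied to
superlevel sets cut at heights proportional to `sup f`, `sup g` and `√(sup f · sup g)`, together with
the layer-cake formula and AM-GM; it then tensorizes to `ℝᵐ`.
-/

open MeasureTheory Set Pointwise
open scoped InnerProductSpace ENNReal

noncomputable section

/-- `ℝ^n` with the Euclidean structure. -/
abbrev E (n : ℕ) := EuclideanSpace ℝ (Fin n)

/-- The polar body `K° = {y : ∀ x ∈ K, ⟨x,y⟩ ≤ 1}`. -/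
def polarBody {n : ℕ} (K : Set (E n)) : Set (E n) := {y | ∀ x ∈ K, ⟪x, y⟫_ℝ ≤ 1}

/-- A set is unconditional if it is invariant under coordinate-wise sign changes. -/
def Uncond {n : ℕ} (K : Set (E n)) : Prop :=
  ∀ x ∈ K, ∀ ε : Fin n → ℝ, (∀ i, ε i = 1 ∨ ε i = -1) →
    (WithLp.toLp 2 (fun i => ε i * x i) : E n) ∈ K

/-- A convex body: compact, convex, with nonempty interior. -/
def IsConvexBody {n : ℕ} (K : Set (E n)) : Prop :=
  IsCompact K ∧ Convex ℝ K ∧ (interior K).Nonempty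

/-- The Steiner symmetral of `K` in direction `u`: over each point of `u^⊥` the fiber
`K_y` is replaced by `(K_y + (-K_y))/2`. -/
def steiner {n : ℕ} (u : E n) (K : Set (E n)) : Set (E n) :=
  {x | ∃ s t : ℝ, (x - ⟪x, u⟫_ℝ • u + s • u) ∈ K ∧ (x - ⟪x, u⟫_ℝ • u + t • u) ∈ K ∧
    ⟪x, u⟫_ℝ = (s - t) / 2}

/-- The geometric mean body `K^{1/2} L^{1/2}`. -/
def geomMean {n : ℕ} (K L : Set (E n)) : Set (E n) :=
  {z | ∃ x ∈ K, ∃ y ∈ L, ∀ i, |z i| = |x i| ^ ((1 : ℝ) / 2) * |y i| ^ ((1 : ℝ) / 2)}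

lemma ENNReal.mul_le_sq_of_add_le_two_mul {x y z : ℝ≥0∞} (h : x + y ≤ 2 * z) :
    x * y ≤ z ^ 2 := by
  have hmean : (x + y) / 2 ≤ z := by
    rwa [ENNReal.div_le_iff two_ne_zero ENNReal.ofNat_ne_top, mul_comm]
  refine le_trans ?_ (pow_le_pow_left₀ zero_le hmean 2)
  rcases eq_or_ne x ∞ with rfl | hx
  · rcases eq_or_ne y 0 with rfl | hy <;> simp [ENNReal.top_div, *]
  rcases eq_or_ne y ∞ with rfl | hy
  · rcases eq_or_ne x 0 with rfl | hx' <;> simp [ENNReal.top_div, *]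
  lift x to NNReal using hx
  lift y to NNReal using hy
  have : x * y ≤ ((x + y) / 2) ^ 2 := by
    rw [div_pow, le_div_iff₀ (by positivity)]
    linarith [four_mul_le_sq_add x y]
  exact_mod_cast this

lemma lintegral_min_ofReal_eq {α : Type*} [MeasurableSpace α] (μ : Measure α) {f : α → ℝ≥0∞}
    (hf : Measurable f) {c : ℝ} (hc : 0 < c) :
    ∫⁻ x, min (f x) (ENNReal.ofReal c) ∂μ =
      ENNReal.ofReal c * ∫⁻ r in Ioo 0 1, μ {x | ENNReal.ofReal (c * r) < f x} := by
  set g : α → ℝ := fun x => (min (f x) (ENNReal.ofReal c)).toReal / c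
  have hmin_ne_top : ∀ x, min (f x) (ENNReal.ofReal c) ≠ ∞ :=
    fun x => (min_le_right _ _ |>.trans_lt ENNReal.ofReal_lt_top).ne
  have hg : ∀ x, min (f x) (ENNReal.ofReal c) = ENNReal.ofReal c * ENNReal.ofReal (g x) := by
    intro x
    rw [← ENNReal.ofReal_mul hc.le, mul_div_cancel₀ _ hc.ne', ENNReal.ofReal_toReal (hmin_ne_top x)]
  have hlevel : ∀ r ∈ Ioi (0 : ℝ), μ {x | r < g x} =
      (Iio 1).indicator (fun r => μ {x | ENNReal.ofReal (c * r) < f x}) r := by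
    intro r hr
    have hiff : ∀ x, r < g x ↔ ENNReal.ofReal (c * r) < f x ∧ r < 1 := by
      intro x
      rw [lt_div_iff₀' hc, ← ENNReal.ofReal_lt_iff_lt_toReal (mul_pos hc hr).le (hmin_ne_top x),
        lt_min_iff, ENNReal.ofReal_lt_ofReal_iff hc, mul_lt_iff_lt_one_right hc]
    by_cases hr1 : r < 1 <;> simp [hiff, hr1]
  simp_rw [hg]
  rw [lintegral_const_mul _ (by fun_prop), lintegral_eq_lintegral_meas_lt μ
    (Filter.Eventually.of_forall fun x => by positivity) (by fun_prop),
    setLIntegral_congr_fun measurableSet_Ioi hlevel, setLIntegral_indicator measurableSet_Iio,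
    inter_comm, Ioi_inter_Iio]

lemma lintegral_eq_iSup_lintegral_min_natCast {α : Type*} [MeasurableSpace α] {μ : Measure α}
    {f : α → ℝ≥0∞} (hf : Measurable f) : ∫⁻ x, f x ∂μ = ⨆ N : ℕ, ∫⁻ x, min (f x) N ∂μ := by
  rw [← lintegral_iSup (fun N => hf.min measurable_const)
    fun N M hNM x => min_le_min_left _ (Nat.mono_cast hNM)]
  congr with x
  rw [← inf_iSup_eq, ENNReal.iSup_natCast, inf_top_eq]

lemma Real.volume_setOf_two_mul_sub_mem (d : ℝ) (C : Set ℝ) :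
    volume {x : ℝ | 2 * x - d ∈ C} = volume C / 2 := by
  have : {x : ℝ | 2 * x - d ∈ C} = (fun x => 2 * x) ⁻¹' ((fun y => y + -d) ⁻¹' C) := by
    ext; simp [sub_eq_add_neg]
  rw [this, Real.volume_preimage_mul_left two_ne_zero, measure_preimage_add_right,
    ENNReal.div_eq_inv_mul, abs_of_pos (by norm_num), ENNReal.ofReal_inv_of_pos two_pos,
    ENNReal.ofReal_ofNat]

lemma IsCompact.volume_add_le_of_midpoint_mem {A B S : Set ℝ} (hA : IsCompact A)
    (hB : IsCompact B) (hAne : A.Nonempty) (hBne : B.Nonempty)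
    (hS : ∀ a ∈ A, ∀ b ∈ B, (a + b) / 2 ∈ S) :
    volume A + volume B ≤ 2 * volume S := by
  set c := sSup A
  set d := sInf B
  set S₁ := {x : ℝ | 2 * x - d ∈ A}
  set S₂ := {x : ℝ | 2 * x - c ∈ B}
  have hS₁ : S₁ ⊆ S := fun x hx => by
    simpa using hS _ hx d (hB.sInf_mem hBne)
  have hS₂ : S₂ ⊆ S := fun x hx => by
    simpa using hS c (hA.sSup_mem hAne) _ hx
  -- `S` contains the translates `(A + d) / 2` and `(c + B) / 2`, which meet only at `(c + d) / 2`
  have hinter : S₁ ∩ S₂ ⊆ {(c + d) / 2} := by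
    rintro x ⟨h₁, h₂⟩
    have := le_csSup hA.bddAbove h₁
    have := csInf_le hB.bddBelow h₂
    rw [mem_singleton_iff]
    linarith
  have hS₂m : MeasurableSet S₂ := hB.measurableSet.preimage (by fun_prop)
  calc volume A + volume B = 2 * (volume S₁ + volume S₂) := by
        rw [Real.volume_setOf_two_mul_sub_mem, Real.volume_setOf_two_mul_sub_mem, mul_add,
          ENNReal.mul_div_cancel two_ne_zero ENNReal.ofNat_ne_top,
          ENNReal.mul_div_cancel two_ne_zero ENNReal.ofNat_ne_top]
    _ = 2 * (volume (S₁ ∪ S₂) + volume (S₁ ∩ S₂)) := by rw [measure_union_add_inter S₁ hS₂m]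
    _ = 2 * volume (S₁ ∪ S₂) := by rw [measure_mono_null hinter (by simp), add_zero]
    _ ≤ 2 * volume S := by gcongr; exact union_subset hS₁ hS₂

lemma Real.volume_add_le_of_midpoint_mem {A B S : Set ℝ} (hA : MeasurableSet A)
    (hB : MeasurableSet B) (hAne : A.Nonempty) (hBne : B.Nonempty)
    (hS : ∀ a ∈ A, ∀ b ∈ B, (a + b) / 2 ∈ S) :
    volume A + volume B ≤ 2 * volume S := by
  obtain ⟨a₀, ha₀⟩ := hAne
  obtain ⟨b₀, hb₀⟩ := hBne
  have hreg : ∀ X : Set ℝ, MeasurableSet X →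
      volume X = ⨆ K ∈ {K | K ⊆ X ∧ IsCompact K}, volume K := fun X hX => by
    rw [hX.measure_eq_iSup_isCompact]
    simp only [mem_ofPred_eq, iSup_and]
  rw [hreg A hA, hreg B hB]
  refine ENNReal.biSup_add_biSup_le (by exact ⟨∅, empty_subset _, isCompact_empty⟩)
    (by exact ⟨∅, empty_subset _, isCompact_empty⟩) fun CA ⟨hCA, hCAc⟩ CB ⟨hCB, hCBc⟩ => ?_
  calc volume CA + volume CB ≤ volume (insert a₀ CA) + volume (insert b₀ CB) := by
        gcongr <;> exact subset_insert _ _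
    _ ≤ 2 * volume S :=
        (hCAc.insert a₀).volume_add_le_of_midpoint_mem (hCBc.insert b₀)
          (insert_nonempty _ _) (insert_nonempty _ _) fun a ha b hb =>
            hS a (insert_subset ha₀ hCA ha) b (insert_subset hb₀ hCB hb)

lemma Real.volume_superlevel_add_le_two_mul {f g h : ℝ → ℝ≥0∞}
    (hfgh : ∀ x y, f x * g y ≤ h ((x + y) / 2) ^ 2) {a b : ℝ} (ha : 0 < a) (hb : 0 < b)
    (hfa : ⨆ x, f x = ENNReal.ofReal a) (hgb : ⨆ y, g y = ENNReal.ofReal b)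
    (hf : Measurable f) (hg : Measurable g) {r : ℝ} (hr : r ∈ Ioo 0 1) :
    volume {x | ENNReal.ofReal (a * r) < f x} + volume {y | ENNReal.ofReal (b * r) < g y} ≤
      2 * volume {z | ENNReal.ofReal (√(a * b) * r) < h z} := by
  have hlevel_lt : ∀ c, 0 < c → ENNReal.ofReal (c * r) < ENNReal.ofReal c := fun c hc =>
    (ENNReal.ofReal_lt_ofReal_iff hc).mpr (mul_lt_of_lt_one_right hc hr.2)
  refine Real.volume_add_le_of_midpoint_mem (measurableSet_lt measurable_const hf)
    (measurableSet_lt measurable_const hg) ?_ ?_ fun x hx y hy => ?_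
  · exact lt_iSup_iff.mp (hfa ▸ hlevel_lt a ha)
  · exact lt_iSup_iff.mp (hgb ▸ hlevel_lt b hb)
  · rw [mem_ofPred_eq, ← ENNReal.pow_lt_pow_left_iff two_ne_zero]
    calc ENNReal.ofReal (√(a * b) * r) ^ 2
        = ENNReal.ofReal (a * r) * ENNReal.ofReal (b * r) := by
          rw [← ENNReal.ofReal_pow (mul_nonneg (Real.sqrt_nonneg _) hr.1.le),
            ← ENNReal.ofReal_mul (mul_nonneg ha.le hr.1.le), mul_pow,
            Real.sq_sqrt (by positivity)]
          ring_nf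
      _ < f x * g y := ENNReal.mul_lt_mul hx hy
      _ ≤ h ((x + y) / 2) ^ 2 := hfgh x y

lemma Real.lintegral_mul_le_sq_of_iSup_ne_top {f g h : ℝ → ℝ≥0∞} (hf : Measurable f)
    (hg : Measurable g) (hh : Measurable h) (hfgh : ∀ x y, f x * g y ≤ h ((x + y) / 2) ^ 2)
    (hf_top : ⨆ x, f x ≠ ∞) (hg_top : ⨆ y, g y ≠ ∞) :
    (∫⁻ x, f x) * (∫⁻ y, g y) ≤ (∫⁻ z, h z) ^ 2 := by
  rcases eq_or_ne (⨆ x, f x) 0 with hf0 | hf0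
  · simp [ENNReal.iSup_eq_zero.mp hf0]
  rcases eq_or_ne (⨆ y, g y) 0 with hg0 | hg0
  · simp [ENNReal.iSup_eq_zero.mp hg0]
  set a := (⨆ x, f x).toReal
  set b := (⨆ y, g y).toReal
  set c := √(a * b)
  have ha : 0 < a := ENNReal.toReal_pos hf0 hf_top
  have hb : 0 < b := ENNReal.toReal_pos hg0 hg_top
  have hfa : ⨆ x, f x = ENNReal.ofReal a := (ENNReal.ofReal_toReal hf_top).symm
  have hgb : ⨆ y, g y = ENNReal.ofReal b := (ENNReal.ofReal_toReal hg_top).symm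
  have hf_eq : ∫⁻ x, f x = ENNReal.ofReal a *
      ∫⁻ r in Ioo 0 1, volume {x | ENNReal.ofReal (a * r) < f x} := by
    rw [← lintegral_min_ofReal_eq volume hf ha]
    exact lintegral_congr fun x => (min_eq_left (hfa ▸ le_iSup f x)).symm
  have hg_eq : ∫⁻ y, g y = ENNReal.ofReal b *
      ∫⁻ r in Ioo 0 1, volume {y | ENNReal.ofReal (b * r) < g y} := by
    rw [← lintegral_min_ofReal_eq volume hg hb]
    exact lintegral_congr fun y => (min_eq_left (hgb ▸ le_iSup g y)).symm
  have hh_ge : ENNReal.ofReal c * ∫⁻ r in Ioo 0 1, volume {z | ENNReal.ofReal (c * r) < h z} ≤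
      ∫⁻ z, h z := by
    rw [← lintegral_min_ofReal_eq volume hh (by positivity)]
    exact lintegral_mono fun z => min_le_left _ _
  have hlevels : (∫⁻ r in Ioo 0 1, volume {x | ENNReal.ofReal (a * r) < f x}) +
      ∫⁻ r in Ioo 0 1, volume {y | ENNReal.ofReal (b * r) < g y} ≤
      2 * ∫⁻ r in Ioo 0 1, volume {z | ENNReal.ofReal (c * r) < h z} := by
    rw [← lintegral_const_mul' _ _ ENNReal.ofNat_ne_top]
    exact (le_lintegral_add _ _).trans (setLIntegral_mono' measurableSet_Ioo fun r hr =>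
      Real.volume_superlevel_add_le_two_mul hfgh ha hb hfa hgb hf hg hr)
  calc (∫⁻ x, f x) * (∫⁻ y, g y) = (ENNReal.ofReal a * ENNReal.ofReal b) *
        ((∫⁻ r in Ioo 0 1, volume {x | ENNReal.ofReal (a * r) < f x}) *
          ∫⁻ r in Ioo 0 1, volume {y | ENNReal.ofReal (b * r) < g y}) := by
        rw [hf_eq, hg_eq]; ring
    _ ≤ (ENNReal.ofReal a * ENNReal.ofReal b) *
        (∫⁻ r in Ioo 0 1, volume {z | ENNReal.ofReal (c * r) < h z}) ^ 2 := by
        gcongr; exact ENNReal.mul_le_sq_of_add_le_two_mul hlevels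
    _ = (ENNReal.ofReal c *
          ∫⁻ r in Ioo 0 1, volume {z | ENNReal.ofReal (c * r) < h z}) ^ 2 := by
        rw [mul_pow, ← ENNReal.ofReal_pow (by positivity), Real.sq_sqrt (by positivity),
          ENNReal.ofReal_mul ha.le]
    _ ≤ (∫⁻ z, h z) ^ 2 := by gcongr

def SatisfiesPrekopaLeindler {X : Type*} [MeasurableSpace X] [Add X] [SMul ℝ X]
    (μ : Measure X) : Prop :=
  ∀ f g h : X → ℝ≥0∞, Measurable f → Measurable g → Measurable h →
    (∀ x y, f x * g y ≤ h ((2⁻¹ : ℝ) • (x + y)) ^ 2) →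
    (∫⁻ x, f x ∂μ) * (∫⁻ y, g y ∂μ) ≤ (∫⁻ z, h z ∂μ) ^ 2

lemma Real.satisfiesPrekopaLeindler_volume : SatisfiesPrekopaLeindler (volume : Measure ℝ) := by
  intro f g h hf hg hh hfgh
  rw [lintegral_eq_iSup_lintegral_min_natCast hf, lintegral_eq_iSup_lintegral_min_natCast hg,
    ENNReal.iSup_mul]
  refine iSup_le fun N => ?_
  rw [ENNReal.mul_iSup]
  refine iSup_le fun M => ?_
  refine Real.lintegral_mul_le_sq_of_iSup_ne_top (hf.min measurable_const)
    (hg.min measurable_const) hh (fun x y => ?_) ?_ ?_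
  · calc min (f x) N * min (g y) M ≤ f x * g y := by gcongr <;> exact min_le_left _ _
      _ ≤ h ((x + y) / 2) ^ 2 := by simpa [smul_eq_mul, div_eq_inv_mul] using hfgh x y
  · exact ne_top_of_le_ne_top (ENNReal.natCast_ne_top N) (iSup_le fun x => min_le_right _ _)
  · exact ne_top_of_le_ne_top (ENNReal.natCast_ne_top M) (iSup_le fun y => min_le_right _ _)

lemma SatisfiesPrekopaLeindler.prod {X Y : Type*} [MeasurableSpace X] [Add X] [SMul ℝ X]
    [MeasurableSpace Y] [Add Y] [SMul ℝ Y] {μ : Measure X} {ν : Measure Y} [SFinite μ]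
    [SFinite ν] (hμ : SatisfiesPrekopaLeindler μ) (hν : SatisfiesPrekopaLeindler ν) :
    SatisfiesPrekopaLeindler (μ.prod ν) := by
  intro f g h hf hg hh hfgh
  rw [lintegral_prod_symm _ hf.aemeasurable, lintegral_prod_symm _ hg.aemeasurable,
    lintegral_prod_symm _ hh.aemeasurable]
  exact hν _ _ _ hf.lintegral_prod_left' hg.lintegral_prod_left' hh.lintegral_prod_left'
    fun y₁ y₂ => hμ _ _ _ (hf.comp measurable_prodMk_right) (hg.comp measurable_prodMk_right)
      (hh.comp measurable_prodMk_right) fun x₁ x₂ => hfgh (x₁, y₁) (x₂, y₂)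

lemma SatisfiesPrekopaLeindler.of_measurePreserving {X Y : Type*} [MeasurableSpace X] [Add X]
    [SMul ℝ X] [MeasurableSpace Y] [Add Y] [SMul ℝ Y] {μ : Measure X} {ν : Measure Y} {φ : Y → X}
    (hφ : MeasurePreserving φ ν μ)
    (hφ_mid : ∀ a b, φ ((2⁻¹ : ℝ) • (a + b)) = (2⁻¹ : ℝ) • (φ a + φ b))
    (hν : SatisfiesPrekopaLeindler ν) : SatisfiesPrekopaLeindler μ := by
  intro f g h hf hg hh hfgh
  rw [← hφ.lintegral_comp hf, ← hφ.lintegral_comp hg, ← hφ.lintegral_comp hh]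
  exact hν _ _ _ (hf.comp hφ.measurable) (hg.comp hφ.measurable) (hh.comp hφ.measurable)
    fun a b => by simpa only [Function.comp, hφ_mid] using hfgh (φ a) (φ b)

lemma satisfiesPrekopaLeindler_volume_pi (m : ℕ) :
    SatisfiesPrekopaLeindler (volume : Measure (Fin m → ℝ)) := by
  induction m with
  | zero =>
    intro f g h _ _ _ hfgh
    have hvol : (volume : Measure (Fin 0 → ℝ)) univ = 1 := by
      simp [volume_pi]
    simpa only [lintegral_unique, hvol, mul_one, Subsingleton.elim _ (default : Fin 0 → ℝ)]
      using hfgh default default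
  | succ m ih =>
    refine (Real.satisfiesPrekopaLeindler_volume.prod ih).of_measurePreserving
      (volume_preserving_piFinSuccAbove (fun _ : Fin (m + 1) => ℝ) 0).symm fun a b => ?_
    ext j
    refine Fin.cases ?_ (fun j => ?_) j <;> simp [mul_add]

lemma setLIntegral_le_of_half_sub_mem {X : Type*} [MeasurableSpace X] [AddCommGroup X]
    [SMul ℝ X] [MeasurableNeg X] {μ : Measure X} [μ.IsNegInvariant]
    (hμ : SatisfiesPrekopaLeindler μ) {F : X → ℝ≥0∞} (hF : Measurable F)
    (hF_neg : ∀ x, F (-x) = F x) (hF_mid : ∀ x y, F x * F y ≤ F ((2⁻¹ : ℝ) • (x + y)) ^ 2)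
    {A B : Set X} (hA : MeasurableSet A) (hB : MeasurableSet B)
    (hAB : ∀ a ∈ A, ∀ b ∈ A, (2⁻¹ : ℝ) • (a - b) ∈ B) :
    ∫⁻ x in A, F x ∂μ ≤ ∫⁻ x in B, F x ∂μ := by
  have hPL := hμ (A.indicator F) (fun y => A.indicator F (-y)) (B.indicator F)
    (hF.indicator hA) ((hF.indicator hA).comp measurable_neg) (hF.indicator hB) fun x y => by
      by_cases hx : x ∈ A
      · by_cases hy : -y ∈ A
        · have hmid : (2⁻¹ : ℝ) • (x + y) ∈ B := by simpa using hAB x hx (-y) hy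
          rw [indicator_of_mem hx, indicator_of_mem hy, indicator_of_mem hmid, hF_neg]
          exact hF_mid x y
        · simp [indicator_of_notMem, hy]
      · simp [indicator_of_notMem, hx]
  rw [lintegral_neg_eq_self, lintegral_indicator hA, lintegral_indicator hB, ← sq] at hPL
  exact (ENNReal.pow_le_pow_left_iff two_ne_zero).mp hPL

section InsertCoord

variable {m : ℕ}

def insertCoord (i : Fin (m + 1)) (s : ℝ) (w : Fin m → ℝ) : E (m + 1) :=
  WithLp.toLp 2 (Fin.insertNth i s w)

@[simp]
lemma insertCoord_apply_same (i : Fin (m + 1)) (s : ℝ) (w : Fin m → ℝ) :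
    insertCoord i s w i = s :=
  Fin.insertNth_apply_same (α := fun _ => ℝ) i s w

@[simp]
lemma insertCoord_apply_succAbove (i : Fin (m + 1)) (s : ℝ) (w : Fin m → ℝ) (j : Fin m) :
    insertCoord i s w (i.succAbove j) = w j :=
  Fin.insertNth_apply_succAbove (α := fun _ => ℝ) i s w j

@[simp]
lemma removeNth_insertCoord (i : Fin (m + 1)) (s : ℝ) (w : Fin m → ℝ) :
    Fin.removeNth i (insertCoord i s w) = w :=
  Fin.removeNth_insertNth (α := fun _ => ℝ) i s w

lemma insertCoord_apply_removeNth (i : Fin (m + 1)) (x : E (m + 1)) :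
    insertCoord i (x i) (Fin.removeNth i x) = x :=
  congrArg (WithLp.toLp 2) (Fin.insertNth_self_removeNth i x.ofLp)

lemma ext_insertCoord (i : Fin (m + 1)) {x y : E (m + 1)} (hi : x i = y i)
    (hsucc : ∀ j, x (i.succAbove j) = y (i.succAbove j)) : x = y := by
  ext j
  exact Fin.succAboveCases i hi hsucc j

lemma half_smul_insertCoord_add_insertCoord_left (i : Fin (m + 1)) (s t : ℝ) (w : Fin m → ℝ) :
    (2⁻¹ : ℝ) • (insertCoord i s w + insertCoord i t w) = insertCoord i (2⁻¹ * (s + t)) w :=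
  ext_insertCoord i (by simp [mul_add]) fun j => by simp; ring

lemma half_smul_insertCoord_add_insertCoord_right (i : Fin (m + 1)) (s : ℝ) (v w : Fin m → ℝ) :
    (2⁻¹ : ℝ) • (insertCoord i s v + insertCoord i s w) = insertCoord i s ((2⁻¹ : ℝ) • (v + w)) :=
  ext_insertCoord i (by simp; ring) (by simp)

lemma neg_insertCoord (i : Fin (m + 1)) (s : ℝ) (w : Fin m → ℝ) :
    -insertCoord i s w = insertCoord i (-s) (-w) :=
  ext_insertCoord i (by simp) (by simp)

lemma inner_insertCoord (i : Fin (m + 1)) (s t : ℝ) (v w : Fin m → ℝ) :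
    ⟪insertCoord i s v, insertCoord i t w⟫_ℝ = s * t + v ⬝ᵥ w := by
  simp [PiLp.inner_apply, Fin.sum_univ_succAbove _ i, dotProduct, mul_comm]

lemma sub_inner_smul_add_smul_single_one (i : Fin (m + 1)) (x : E (m + 1)) (s : ℝ) :
    x - ⟪x, EuclideanSpace.single i 1⟫_ℝ • EuclideanSpace.single i 1 +
      s • EuclideanSpace.single i 1 = insertCoord i s (Fin.removeNth i x) :=
  ext_insertCoord i (by simp [EuclideanSpace.inner_single_right])
    (by simp [Fin.removeNth_apply, Fin.succAbove_ne])

lemma mem_steiner_single_iff (i : Fin (m + 1)) (K : Set (E (m + 1))) (x : E (m + 1)) :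
    x ∈ steiner (EuclideanSpace.single i 1) K ↔
      ∃ s t : ℝ, insertCoord i s (Fin.removeNth i x) ∈ K ∧
        insertCoord i t (Fin.removeNth i x) ∈ K ∧ x i = (s - t) / 2 := by
  simp only [steiner, mem_ofPred_eq, sub_inner_smul_add_smul_single_one]
  simp [EuclideanSpace.inner_single_right]

lemma insertCoord_half_sub_mem_steiner {i : Fin (m + 1)} {K : Set (E (m + 1))} {s t : ℝ}
    {w : Fin m → ℝ} (hs : insertCoord i s w ∈ K) (ht : insertCoord i t w ∈ K) :
    insertCoord i (2⁻¹ * (s - t)) w ∈ steiner (EuclideanSpace.single i 1) K := by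
  rw [mem_steiner_single_iff]
  exact ⟨s, t, by simpa using hs, by simpa using ht, by simp [div_eq_inv_mul]⟩

lemma insertCoord_half_sub_mem_polarBody_steiner {i : Fin (m + 1)} {K : Set (E (m + 1))}
    (hK : ∀ x ∈ K, -x ∈ K) {ζ : ℝ} {w₁ w₂ : Fin m → ℝ}
    (h₁ : insertCoord i ζ w₁ ∈ polarBody K) (h₂ : insertCoord i ζ w₂ ∈ polarBody K) :
    insertCoord i ζ ((2⁻¹ : ℝ) • (w₁ - w₂)) ∈
      polarBody (steiner (EuclideanSpace.single i 1) K) := by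
  intro x hx
  obtain ⟨s, t, hs, ht, hxi⟩ := (mem_steiner_single_iff i K x).mp hx
  have hs' := h₁ _ hs
  have ht' := h₂ _ (hK _ ht)
  rw [neg_insertCoord, inner_insertCoord] at ht'
  rw [inner_insertCoord] at hs'
  rw [← insertCoord_apply_removeNth i x, inner_insertCoord, hxi]
  simp only [dotProduct_smul, dotProduct_sub, neg_dotProduct, smul_eq_mul] at ht' ⊢
  linarith

lemma apply_insertCoord_mul_smul {γ : Type*} {f : E (m + 1) → γ}
    (hf : ∀ (x : E (m + 1)) (ε : Fin (m + 1) → ℝ), (∀ i, ε i = 1 ∨ ε i = -1) →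
      f (WithLp.toLp 2 (fun i => ε i * x i) : E (m + 1)) = f x)
    (i : Fin (m + 1)) {a b : ℝ} (ha : a = 1 ∨ a = -1) (hb : b = 1 ∨ b = -1) (s : ℝ)
    (w : Fin m → ℝ) : f (insertCoord i (a * s) (b • w)) = f (insertCoord i s w) := by
  rw [← hf (insertCoord i s w) (fun j => if j = i then a else b)
    fun j => by split_ifs <;> assumption]
  exact congrArg f (ext_insertCoord i (by simp) (by simp [Fin.succAbove_ne]))

end InsertCoord

section Fubini

variable {m : ℕ}

lemma measurePreserving_insertCoord (i : Fin (m + 1)) :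
    MeasurePreserving (fun p : ℝ × (Fin m → ℝ) => insertCoord i p.1 p.2) volume volume :=
  (EuclideanSpace.volume_preserving_symm_measurableEquiv_toLp (Fin (m + 1))).symm.comp
    (volume_preserving_piFinSuccAbove (fun _ => ℝ) i).symm

lemma setLIntegral_eq_lintegral_setLIntegral_insertCoord_fst (i : Fin (m + 1))
    {F : E (m + 1) → ℝ≥0∞} (hF : Measurable F) {K : Set (E (m + 1))} (hK : MeasurableSet K) :
    ∫⁻ x in K, F x =
      ∫⁻ w, ∫⁻ s in {s | insertCoord i s w ∈ K}, F (insertCoord i s w) := by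
  have hins := measurePreserving_insertCoord i
  rw [← lintegral_indicator hK, ← hins.lintegral_comp (hF.indicator hK), Measure.volume_eq_prod,
    lintegral_prod_symm (fun p => K.indicator F (insertCoord i p.1 p.2))
      ((hF.indicator hK).comp hins.measurable).aemeasurable]
  refine lintegral_congr fun w => ?_
  have hfiber : MeasurableSet {s | insertCoord i s w ∈ K} :=
    hK.preimage (hins.measurable.comp measurable_prodMk_right)
  rw [← lintegral_indicator hfiber]
  exact lintegral_congr fun s => (indicator_comp_right _).symm

lemma setLIntegral_eq_lintegral_setLIntegral_insertCoord_snd (i : Fin (m + 1))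
    {F : E (m + 1) → ℝ≥0∞} (hF : Measurable F) {K : Set (E (m + 1))} (hK : MeasurableSet K) :
    ∫⁻ x in K, F x =
      ∫⁻ s, ∫⁻ w in {w | insertCoord i s w ∈ K}, F (insertCoord i s w) := by
  have hins := measurePreserving_insertCoord i
  rw [← lintegral_indicator hK, ← hins.lintegral_comp (hF.indicator hK), Measure.volume_eq_prod,
    lintegral_prod (fun p => K.indicator F (insertCoord i p.1 p.2))
      ((hF.indicator hK).comp hins.measurable).aemeasurable]
  refine lintegral_congr fun s => ?_
  have hfiber : MeasurableSet {w | insertCoord i s w ∈ K} :=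
    hK.preimage (hins.measurable.comp measurable_prodMk_left)
  rw [← lintegral_indicator hfiber]
  exact lintegral_congr fun w => (indicator_comp_right _).symm

end Fubini

lemma isClosed_polarBody {n : ℕ} (K : Set (E n)) : IsClosed (polarBody K) := by
  simp only [polarBody, ofPred_forall]
  exact isClosed_biInter fun x _ => isClosed_le (by fun_prop) continuous_const

section Symmetrization

variable {m : ℕ} (i : Fin (m + 1)) {F : E (m + 1) → ℝ≥0∞}

theorem withDensity_le_withDensity_steiner (hF : Measurable F)
    (hF_mid : ∀ x y, F x * F y ≤ F ((2⁻¹ : ℝ) • (x + y)) ^ 2)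
    (hF_neg : ∀ s w, F (insertCoord i (-s) w) = F (insertCoord i s w))
    {K : Set (E (m + 1))} (hK : MeasurableSet K) :
    volume.withDensity F K ≤ volume.withDensity F (steiner (EuclideanSpace.single i 1) K) := by
  -- the Steiner symmetral of a measurable set need not be measurable: use a measurable hull
  set T := toMeasurable (volume.withDensity F) (steiner (EuclideanSpace.single i 1) K)
  have hT : MeasurableSet T := measurableSet_toMeasurable _ _
  have hfiber : ∀ w, Measurable fun s => insertCoord i s w := fun w =>
    (measurePreserving_insertCoord i).measurable.comp measurable_prodMk_right
  rw [← measure_toMeasurable (steiner (EuclideanSpace.single i 1) K), withDensity_apply _ hK,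
    withDensity_apply _ hT,
    setLIntegral_eq_lintegral_setLIntegral_insertCoord_fst i hF hK,
    setLIntegral_eq_lintegral_setLIntegral_insertCoord_fst i hF hT]
  refine lintegral_mono fun w => setLIntegral_le_of_half_sub_mem
    Real.satisfiesPrekopaLeindler_volume (hF.comp (hfiber w)) (fun s => hF_neg s w)
    (fun s t => ?_) (hK.preimage (hfiber w)) (hT.preimage (hfiber w))
    fun s hs t ht => subset_toMeasurable _ _ (insertCoord_half_sub_mem_steiner hs ht)
  simpa only [Function.comp_apply, smul_eq_mul, half_smul_insertCoord_add_insertCoord_left]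
    using hF_mid (insertCoord i s w) (insertCoord i t w)

theorem withDensity_polarBody_le_withDensity_polarBody_steiner (hF : Measurable F)
    (hF_mid : ∀ x y, F x * F y ≤ F ((2⁻¹ : ℝ) • (x + y)) ^ 2)
    (hF_neg : ∀ s w, F (insertCoord i s (-w)) = F (insertCoord i s w))
    {K : Set (E (m + 1))} (hK : ∀ x ∈ K, -x ∈ K) :
    volume.withDensity F (polarBody K) ≤
      volume.withDensity F (polarBody (steiner (EuclideanSpace.single i 1) K)) := by
  have hP₀ := (isClosed_polarBody K).measurableSet
  have hP₁ := (isClosed_polarBody (steiner (EuclideanSpace.single i 1) K)).measurableSet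
  have hfiber : ∀ s, Measurable fun w => insertCoord i s w := fun s =>
    (measurePreserving_insertCoord i).measurable.comp measurable_prodMk_left
  rw [withDensity_apply _ hP₀, withDensity_apply _ hP₁,
    setLIntegral_eq_lintegral_setLIntegral_insertCoord_snd i hF hP₀,
    setLIntegral_eq_lintegral_setLIntegral_insertCoord_snd i hF hP₁]
  refine lintegral_mono fun s => setLIntegral_le_of_half_sub_mem
    (satisfiesPrekopaLeindler_volume_pi m) (hF.comp (hfiber s)) (fun w => hF_neg s w)
    (fun v w => ?_) (hP₀.preimage (hfiber s)) (hP₁.preimage (hfiber s))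
    fun v hv w hw => insertCoord_half_sub_mem_polarBody_steiner hK hv hw
  simpa only [Function.comp_apply, half_smul_insertCoord_add_insertCoord_right] using
    hF_mid (insertCoord i s v) (insertCoord i s w)

end Symmetrization

lemma ofReal_mul_ofReal_le_ofReal_half_smul_add_sq {V : Type*} [AddCommGroup V] [Module ℝ V]
    {f : V → ℝ} (hf0 : ∀ x, 0 ≤ f x)
    (hflc : ∀ x y : V, ∀ t : ℝ, t ∈ Icc (0 : ℝ) 1 →
      f x ^ (1 - t) * f y ^ t ≤ f ((1 - t) • x + t • y)) (x y : V) :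
    ENNReal.ofReal (f x) * ENNReal.ofReal (f y) ≤
      ENNReal.ofReal (f ((2⁻¹ : ℝ) • (x + y))) ^ 2 := by
  have hmid := hflc x y 2⁻¹ ⟨by norm_num, by norm_num⟩
  rw [show (1 : ℝ) - 2⁻¹ = 2⁻¹ by norm_num, ← smul_add] at hmid
  have hsq : ∀ a : ℝ, 0 ≤ a → (a ^ (2⁻¹ : ℝ)) ^ 2 = a := fun a ha => by
    simpa using Real.rpow_inv_natCast_pow ha two_ne_zero
  rw [← ENNReal.ofReal_mul (hf0 x), ← ENNReal.ofReal_pow (hf0 _)]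
  refine ENNReal.ofReal_le_ofReal ?_
  calc f x * f y = (f x ^ (2⁻¹ : ℝ) * f y ^ (2⁻¹ : ℝ)) ^ 2 := by
        rw [mul_pow, hsq _ (hf0 x), hsq _ (hf0 y)]
    _ ≤ f ((2⁻¹ : ℝ) • (x + y)) ^ 2 := pow_le_pow_left₀
      (mul_nonneg (Real.rpow_nonneg (hf0 x) _) (Real.rpow_nonneg (hf0 y) _)) hmid 2

theorem blaschke_santalo_stmt (n : ℕ) (f : E n → ℝ) (hfm : Measurable f) (hf0 : ∀ x, 0 ≤ f x)
    (hflc : ∀ x y : E n, ∀ t : ℝ, t ∈ Set.Icc (0 : ℝ) 1 →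
      f x ^ (1 - t) * f y ^ t ≤ f ((1 - t) • x + t • y))
    (hfu : ∀ (x : E n) (ε : Fin n → ℝ), (∀ i, ε i = 1 ∨ ε i = -1) →
      f (WithLp.toLp 2 (fun i => ε i * x i) : E n) = f x)
    (μ : Measure (E n)) (hμ : μ = volume.withDensity fun x => ENNReal.ofReal (f x))
    (K : Set (E n)) (hK : IsConvexBody K) (hsym : K = -K)
    (i : Fin n) (u : E n) (hu : u = EuclideanSpace.single i (1 : ℝ)) :
    μ K * μ (polarBody K) ≤ μ (steiner u K) * μ (polarBody (steiner u K)) := by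
  subst hμ hu
  cases n with
  | zero => exact i.elim0
  | succ m =>
    have hF_mid := ofReal_mul_ofReal_le_ofReal_half_smul_add_sq hf0 hflc
    have hK_symm : ∀ x ∈ K, -x ∈ K := fun x hx => by
      rw [hsym]
      exact neg_mem_neg.mpr hx
    have hF_neg_fst : ∀ s w, ENNReal.ofReal (f (insertCoord i (-s) w)) =
        ENNReal.ofReal (f (insertCoord i s w)) := fun s w =>
      congrArg _ (by simpa using apply_insertCoord_mul_smul hfu i (Or.inr rfl) (Or.inl rfl) s w)
    have hF_neg_snd : ∀ s w, ENNReal.ofReal (f (insertCoord i s (-w))) =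
        ENNReal.ofReal (f (insertCoord i s w)) := fun s w =>
      congrArg _ (by simpa using apply_insertCoord_mul_smul hfu i (Or.inl rfl) (Or.inr rfl) s w)
    exact mul_le_mul'
      (withDensity_le_withDensity_steiner i hfm.ennreal_ofReal hF_mid hF_neg_fst
        hK.1.isClosed.measurableSet)
      (withDensity_polarBody_le_withDensity_polarBody_steiner i hfm.ennreal_ofReal hF_mid
        hF_neg_snd hK_symm)
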